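/- arXiv:1811.09530 — 5 statements merged into one kernel-verified Lean document; each statement's English description precedes it below -/
import Mathlib

section
/- Let P be an ideal of K[X_1,...,X_n] and u ⊆ {X_1,...,X_n} a maximal independent set with respect to P (i.e., P ∩ K[u] = 0 and |u| = dim K[X]/P). Then P is prime if and only if the extension P·K(u)[X∖u] is a maximal ideal of K(u)[X∖u] and P equals the contraction P·K(u)[X∖u] ∩ K[X]. -/
/-!
If `P` is prime and misses `K[u] ∖ {0}`, it is contracted from `S⁻¹K[X]` and extends to a prime.
The extension is maximal because a prime `Q ⊋ P` that still misses `K[u] ∖ {0}` is impossible: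
the variables of `u` stay algebraically independent in `K[X]/Q`, so `dim K[X]/Q ≥ |u|` and hence
`dim K[X]/P ≥ |u| + 1`. That `dim A` is at least the size of any algebraically independent family
of a finitely generated domain `A` is proved by induction: if `x₀` is transcendental over
`R = K[x₁, …, x_d]`, some nonzero prime `p` of `A` meets `R` only in `0`, and `x₁, …, x_d` remain
independent in `A/p`. Conversely, a contraction of a maximal ideal is prime.
-/

open MvPolynomial

/-- For a subset `u` of the variables, the multiplicative set `S = K[u] ∖ {0}` of nonzero
polynomials involving only the variables in `u`; the localization of `K[X]` at `S` is
`K(u)[X∖u]`. -/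
def suppSubmonoid {K : Type*} [Field K] {n : ℕ} (u : Finset (Fin n)) :
    Submonoid (MvPolynomial (Fin n) K) where
  carrier := {p | p ∈ MvPolynomial.supported K (↑u : Set (Fin n)) ∧ p ≠ 0}
  one_mem' := ⟨one_mem _, one_ne_zero⟩
  mul_mem' := fun ha hb => ⟨mul_mem ha.1 hb.1, mul_ne_zero ha.2 hb.2⟩

open scoped nonZeroDivisors

universe v

theorem Ideal.injOn_quotient_mk {R T : Type*} [CommRing R] [SetLike T R] [AddSubgroupClass T R]
    {I : Ideal R} {S : T} (h : ∀ s ∈ S, s ∈ I → s = 0) : Set.InjOn (Ideal.Quotient.mk I) S :=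
  fun _ ha _ hb hab ↦ sub_eq_zero.mp (h _ (sub_mem ha hb) (Ideal.Quotient.eq.mp hab))

theorem IsLocalization.isMaximal_map_of_forall_isPrime_disjoint {R S : Type*} [CommRing R]
    [CommRing S] [Algebra R S] (M : Submonoid R) [IsLocalization M S] {P : Ideal R}
    [hP : P.IsPrime] (hPM : Disjoint (M : Set R) P)
    (h : ∀ Q : Ideal R, Q.IsPrime → Disjoint (M : Set R) Q → P ≤ Q → Q = P) :
    (P.map (algebraMap R S)).IsMaximal := by
  have hmap : (P.map (algebraMap R S)).IsPrime := isPrime_of_isPrime_disjoint M S P hP hPM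
  obtain ⟨m, hm, hPm⟩ := Ideal.exists_le_maximal _ hmap.ne_top
  obtain ⟨hQ, hQM⟩ := (isPrime_iff_isPrime_disjoint M S m).mp hm.isPrime
  have hQP := h _ hQ hQM (Ideal.map_le_iff_le_comap.mp hPm)
  rwa [← hQP, map_under M S m]

theorem ringKrullDim_succ_le_of_surjective_of_ker_ne_bot {R S : Type*} [CommRing R] [IsDomain R]
    [CommRing S] {f : R →+* S} (hf : Function.Surjective f) (hker : RingHom.ker f ≠ ⊥) :
    ringKrullDim S + 1 ≤ ringKrullDim R := by
  obtain ⟨r, hr, hr0⟩ := Submodule.exists_mem_ne_zero_of_ne_bot hker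
  exact ringKrullDim_succ_le_of_surjective f hf (mem_nonZeroDivisors_of_ne_zero hr0) hr

theorem ringKrullDim_quotient_succ_le_of_lt {R : Type*} [CommRing R] {P Q : Ideal R} [P.IsPrime]
    (h : P < Q) : ringKrullDim (R ⧸ Q) + 1 ≤ ringKrullDim (R ⧸ P) := by
  refine ringKrullDim_succ_le_of_surjective_of_ker_ne_bot (Ideal.Quotient.factor_surjective h.le) ?_
  rw [Ideal.Quotient.factor_ker, ne_eq, Ideal.map_eq_bot_iff_le_ker, Ideal.mk_ker]
  exact h.not_ge

theorem exists_isPrime_ne_bot_comap_eq_bot_of_transcendental {R A : Type v} [CommRing R]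
    [IsDomain R] [CommRing A] [IsDomain A] [Algebra R A] [FaithfulSMul R A]
    [Algebra.FiniteType R A] {a : A} (ha : Transcendental R a) :
    ∃ p : Ideal A, p.IsPrime ∧ p ≠ ⊥ ∧ p.comap (algebraMap R A) = ⊥ := by
  have hM : R⁰.map (algebraMap R A) ≤ A⁰ :=
    map_le_nonZeroDivisors_of_injective _ (FaithfulSMul.algebraMap_injective R A) le_rfl
  let B := Localization (R⁰.map (algebraMap R A))
  have : IsDomain B := IsLocalization.isDomain_localization hM
  let : Algebra (FractionRing R) B :=
    (IsLocalization.map B (algebraMap R A) (Submonoid.le_comap_map R⁰)).toAlgebra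
  have : IsScalarTower R (FractionRing R) B := .of_algebraMap_eq fun r ↦ by
    rw [IsScalarTower.algebraMap_apply R A B]
    exact (IsLocalization.map_eq (Submonoid.le_comap_map R⁰) r).symm
  have : Algebra.FiniteType (FractionRing R) B := RingHom.finiteType_algebraMap.mp <|
    RingHom.finiteType_localizationPreserves (algebraMap R A) R⁰ (FractionRing R) B
      (RingHom.finiteType_algebraMap.mpr ‹_›)
  -- Zariski's lemma: were `B` a field, it would be algebraic over `Frac R`, and so would `a`.
  have hB : ¬ IsField B := by
    intro hB
    let := hB.toField
    have : Module.Finite (FractionRing R) B := finite_of_finite_type_of_isJacobsonRing _ B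
    refine ha ((isAlgebraic_algebraMap_iff (IsLocalization.injective B hM)).mp ?_)
    exact (IsFractionRing.isAlgebraic_iff R (FractionRing R) B).mpr
      (Algebra.IsAlgebraic.isAlgebraic _)
  obtain ⟨m, hm0, hm⟩ := Ring.not_isField_iff_exists_prime.mp hB
  refine ⟨m.comap (algebraMap A B), hm.comap _,
    (IsLocalization.bot_lt_under_prime _ B hM m hm0).ne', ?_⟩
  rw [Ideal.comap_comap, eq_bot_iff]
  intro r hr
  by_contra hr0
  have hu : IsUnit (algebraMap A B (algebraMap R A r)) :=
    IsLocalization.map_units B (⟨_, Submonoid.mem_map_of_mem _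
      (mem_nonZeroDivisors_of_ne_zero hr0)⟩ : R⁰.map (algebraMap R A))
  exact hm.ne_top (Ideal.eq_top_of_isUnit_mem _ hr hu)

theorem card_le_ringKrullDim_of_algebraicIndependent {K A ι : Type*} [Field K] [CommRing A]
    [IsDomain A] [Algebra K A] [Algebra.FiniteType K A] [Fintype ι] {x : ι → A}
    (hx : AlgebraicIndependent K x) : (Fintype.card ι : WithBot ℕ∞) ≤ ringKrullDim A := by
  induction h : Fintype.card ι generalizing ι A with
  | zero => simpa using ringKrullDim_nonneg_of_nontrivial
  | succ d ih =>
    classical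
    obtain ⟨i⟩ : Nonempty ι := Fintype.card_pos_iff.mp (by omega)
    obtain ⟨hx', htrans⟩ := (AlgebraicIndependent.iff_transcendental_adjoin_image i).mp hx
    set R := Algebra.adjoin K (x '' {i}ᶜ)
    have : Algebra.FiniteType R A := .of_restrictScalars_finiteType K R A
    obtain ⟨p, hp, hp0, hpR⟩ := exists_isPrime_ne_bot_comap_eq_bot_of_transcendental htrans
    have hpR' : ∀ r ∈ R, r ∈ p → r = 0 := fun r hr hrp ↦
      congrArg Subtype.val (show (⟨r, hr⟩ : R) = 0 by rw [← Ideal.mem_bot, ← hpR]; exact hrp)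
    have hy : AlgebraicIndependent K fun j : {j // j ≠ i} ↦ Ideal.Quotient.mk p (x j) := by
      refine hx'.map (f := Ideal.Quotient.mkₐ K p) ((Ideal.injOn_quotient_mk hpR').mono ?_)
      exact Algebra.adjoin_mono fun _ ⟨j, hj⟩ ↦ ⟨j, j.2, hj⟩
    calc ((d + 1 : ℕ) : WithBot ℕ∞) = (d : WithBot ℕ∞) + 1 := by norm_cast
      _ ≤ ringKrullDim (A ⧸ p) + 1 := by
        gcongr
        exact ih hy (by simp [Fintype.card_subtype_compl, h])
      _ ≤ ringKrullDim A := ringKrullDim_succ_le_of_surjective_of_ker_ne_bot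
        Ideal.Quotient.mk_surjective (by rwa [Ideal.mk_ker])

namespace MvPolynomial

variable {K σ : Type*} [Field K] {Q : Ideal (MvPolynomial σ K)}

theorem algebraicIndependent_quotient_mk_X {u : Set σ}
    (h : ∀ p ∈ supported K u, p ∈ Q → p = 0) :
    AlgebraicIndependent K fun i : u ↦ Ideal.Quotient.mk Q (X i) := by
  refine ((algebraicIndependent_X σ K).comp _ Subtype.val_injective).map
    (f := Ideal.Quotient.mkₐ K Q) ?_
  rw [Set.range_comp, Subtype.range_coe, ← supported_eq_adjoin_X]
  exact Ideal.injOn_quotient_mk h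

theorem card_le_ringKrullDim_quotient [Finite σ] [Q.IsPrime] {u : Finset σ}
    (h : ∀ p ∈ supported K ↑u, p ∈ Q → p = 0) :
    (u.card : WithBot ℕ∞) ≤ ringKrullDim (MvPolynomial σ K ⧸ Q) := by
  simpa using card_le_ringKrullDim_of_algebraicIndependent (algebraicIndependent_quotient_mk_X h)

end MvPolynomial

theorem disjoint_suppSubmonoid_iff {K : Type*} [Field K] {n : ℕ} {u : Finset (Fin n)}
    {I : Ideal (MvPolynomial (Fin n) K)} :
    Disjoint (suppSubmonoid (K := K) u : Set (MvPolynomial (Fin n) K)) I ↔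
      ∀ p ∈ supported K (u : Set (Fin n)), p ∈ I → p = 0 := by
  refine Set.disjoint_left.trans ⟨fun h p hp hpI ↦ ?_, fun h p hp hpI ↦ hp.2 (h p hp.1 hpI)⟩
  by_contra hp0
  exact h ⟨hp, hp0⟩ hpI

/-- Let `P` be an ideal of `K[X_1,...,X_n]` and `u ⊆ {X_1,...,X_n}` a maximal
independent set with respect to `P` (i.e., `P ∩ K[u] = 0` and `|u| = dim K[X]/P`). Then `P`
is prime if and only if the extension `P·K(u)[X∖u]` is a maximal ideal of `K(u)[X∖u]` and
`P` equals the contraction `P·K(u)[X∖u] ∩ K[X]`.  Here `K(u)[X∖u]` is realized as the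
localization of `K[X]` at the multiplicative set `S = K[u] ∖ {0}`. -/
theorem stmt_0 {K : Type*} [Field K] {n : ℕ} (P : Ideal (MvPolynomial (Fin n) K))
    (u : Finset (Fin n))
    (hindep : ∀ p ∈ MvPolynomial.supported K (↑u : Set (Fin n)), p ∈ P → p = 0)
    (hmax : ringKrullDim (MvPolynomial (Fin n) K ⧸ P) = u.card) :
    P.IsPrime ↔
      (Ideal.map (algebraMap (MvPolynomial (Fin n) K) (Localization (suppSubmonoid (K := K) u)))
          P).IsMaximal ∧
        P = Ideal.comap (algebraMap (MvPolynomial (Fin n) K) (Localization (suppSubmonoid (K := K) u)))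
              (Ideal.map
                (algebraMap (MvPolynomial (Fin n) K) (Localization (suppSubmonoid (K := K) u))) P) := by
  have hPS := disjoint_suppSubmonoid_iff.mpr hindep
  refine ⟨fun hP ↦ ⟨?_, ?_⟩, fun ⟨hPmax, hPcontr⟩ ↦ hPcontr ▸ hPmax.isPrime.comap _⟩
  · refine IsLocalization.isMaximal_map_of_forall_isPrime_disjoint _ hPS fun Q hQ hQS hPQ ↦ ?_
    refine (hPQ.lt_or_eq.resolve_left fun hlt ↦ ?_).symm
    have : ((u.card + 1 : ℕ) : WithBot ℕ∞) ≤ u.card := calc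
      ((u.card + 1 : ℕ) : WithBot ℕ∞) = u.card + 1 := by norm_cast
      _ ≤ ringKrullDim (MvPolynomial (Fin n) K ⧸ Q) + 1 := by
        gcongr
        exact card_le_ringKrullDim_quotient (disjoint_suppSubmonoid_iff.mp hQS)
      _ ≤ ringKrullDim (MvPolynomial (Fin n) K ⧸ P) := ringKrullDim_quotient_succ_le_of_lt hlt
      _ = u.card := hmax
    exact Nat.not_succ_le_self _ (by exact_mod_cast this)
  · exact (IsLocalization.under_map_of_isPrime_disjoint _ _ hP hPS).symm
end

section
/- Let I be an ideal of a commutative ring R and h ∈ R such that I : ⟨h^m⟩ = I : ⟨h^∞⟩ for some m ≥ 1. Then I = (I : ⟨h^m⟩) ∩ (I + ⟨h^m⟩). -/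
/-! If `a` has stable colon, `I : ⟨a²⟩ = I : ⟨a⟩`, then every `x = i + r a` with `i ∈ I` and
`x a ∈ I` satisfies `r a² ∈ I`, hence `r a ∈ I` and `x ∈ I`. For `a = hᵐ` the colon is stable
because `I : ⟨h²ᵐ⟩` lies in the saturation, which is `I : ⟨hᵐ⟩`. -/

namespace Ideal

variable {R : Type*} [CommRing R] {I : Ideal R} {a : R}

theorem colon_inf_sup_span_singleton_le (ha : I.colon (span {a * a}) ≤ I.colon (span {a})) :
    I.colon (span {a}) ⊓ (I ⊔ span {a}) ≤ I := by
  intro x hx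
  obtain ⟨hxa, hx⟩ := Submodule.mem_inf.mp hx
  obtain ⟨i, hi, y, hy, rfl⟩ := Submodule.mem_sup.mp hx
  obtain ⟨r, rfl⟩ := mem_span_singleton'.mp hy
  rw [mem_colon_span_singleton] at hxa
  have hraa : r * (a * a) ∈ I := by
    simpa [add_mul, mul_assoc] using I.sub_mem hxa (I.mul_mem_right a hi)
  exact I.add_mem hi (mem_colon_span_singleton.mp (ha (mem_colon_span_singleton.mpr hraa)))

theorem eq_colon_inf_sup_span_singleton (ha : I.colon (span {a * a}) ≤ I.colon (span {a})) :
    I = I.colon (span {a}) ⊓ (I ⊔ span {a}) :=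
  le_antisymm (le_inf le_colon le_sup_left) (colon_inf_sup_span_singleton_le ha)

end Ideal

theorem stmt_5_general {R : Type*} [CommRing R] (I : Ideal R) (h : R) (m : ℕ)
    (hsat : ∀ g : R, h ^ m * g ∈ I ↔ ∃ k : ℕ, h ^ k * g ∈ I) :
    I = Submodule.colon I (Ideal.span {h ^ m}) ⊓ (I ⊔ Ideal.span {h ^ m}) := by
  refine Ideal.eq_colon_inf_sup_span_singleton fun r hr => ?_
  rw [Ideal.mem_colon_span_singleton] at hr ⊢
  rw [mul_comm, hsat]
  exact ⟨m + m, by rwa [pow_add, mul_comm]⟩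

/-- Let `I` be an ideal of a commutative ring `R` and `h ∈ R` such that
`I : ⟨h^m⟩ = I : ⟨h^∞⟩` for some `m ≥ 1`. Then `I = (I : ⟨h^m⟩) ∩ (I + ⟨h^m⟩)`.
Here `I : ⟨h^m⟩ = {g : h^m * g ∈ I}` and the saturation `I : ⟨h^∞⟩ = ⋃_k (I : ⟨h^k⟩)`. -/
theorem stmt_5 {R : Type*} [CommRing R] (I : Ideal R) (h : R) (m : ℕ) (hm : 1 ≤ m)
    (hsat : ∀ g : R, h ^ m * g ∈ I ↔ ∃ k : ℕ, h ^ k * g ∈ I) :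
    I = Submodule.colon I (Ideal.span {h ^ m}) ⊓ (I ⊔ Ideal.span {h ^ m}) :=
  stmt_5_general I h m hsat
end

section
/- Let I ⊆ K[X] be an ideal with maximal independent set u, and let I_0 = ⟨g_1,...,g_r⟩ ⊆ I where {g_1,...,g_r} ⊆ I is a Gröbner basis of I·K(u)[X∖u]. Let c ∈ K[u] be the lcm of the leading coefficients of the g_i viewed in K(u)[X∖u]. Then I_0 : ⟨c^∞⟩ = I : ⟨c^∞⟩. -/
/-!
Write `K[X] = A[X∖u]` with `A = K[u]`. Over the fraction field of `A` the leading monomial of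
every nonzero `f ∈ I` is divisible by the leading monomial of some `g ∈ G`. Back in `A[X∖u]`,
the S-polynomial `lc(g)·f - X^(deg f - deg g)·lc(f)·g` lies in `I` and has smaller leading
monomial, and `lc(g) ∣ c`; induction on the leading monomial gives `c^N f ∈ ⟨G⟩`, i.e.
`I ⊆ ⟨G⟩ : c^∞`, which forces the two saturations to agree.
-/

open MvPolynomial

noncomputable section

/-- The saturation `I : ⟨f^∞⟩ = {g : f^m * g ∈ I for some m ≥ 0}`, as an ideal. -/
def Ideal.satur {R : Type*} [CommRing R] (I : Ideal R) (f : R) : Ideal R where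
  carrier := {g | ∃ m : ℕ, f ^ m * g ∈ I}
  zero_mem' := ⟨0, by simp⟩
  add_mem' := by
    rintro a b ⟨m, hm⟩ ⟨k, hk⟩
    refine ⟨m + k, ?_⟩
    have : f ^ (m + k) * (a + b) = f ^ k * (f ^ m * a) + f ^ m * (f ^ k * b) := by ring
    rw [this]
    exact add_mem (Ideal.mul_mem_left _ _ hm) (Ideal.mul_mem_left _ _ hk)
  smul_mem' := by
    rintro c a ⟨m, hm⟩
    refine ⟨m, ?_⟩
    have : f ^ m * (c • a) = c * (f ^ m * a) := by simp [smul_eq_mul]; ring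
    rw [this]
    exact Ideal.mul_mem_left _ _ hm

variable {K : Type} [Field K] {τ υ : Type} [Fintype τ] [Fintype υ]

/-- The degree (leading exponent) of a multivariate polynomial with respect to a monomial
order `m`. -/
def mdeg {S : Type*} [CommSemiring S] (m : MonomialOrder τ) (p : MvPolynomial τ S) :
    τ →₀ ℕ :=
  m.toSyn.symm (p.support.sup fun d => m.toSyn d)

/-- The leading coefficient of a multivariate polynomial with respect to a monomial
order `m`. -/
def lCoeff {S : Type*} [CommSemiring S] (m : MonomialOrder τ) (p : MvPolynomial τ S) : S :=
  p.coeff (mdeg m p)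

/-- `G` is a Gröbner basis of the ideal `J` with respect to the monomial order `m`:
`G ⊆ J` and the leading terms of the elements of `G` generate the ideal of leading terms
of `J`. -/
def IsGroebnerBasis {F : Type*} [Field F] (m : MonomialOrder τ)
    (J : Ideal (MvPolynomial τ F)) (G : Set (MvPolynomial τ F)) : Prop :=
  G ⊆ (J : Set (MvPolynomial τ F)) ∧
    Ideal.span ((fun g => (monomial (mdeg m g)) (lCoeff m g)) '' G) =
      Ideal.span ((fun g => (monomial (mdeg m g)) (lCoeff m g)) ''
        {p : MvPolynomial τ F | p ∈ J ∧ p ≠ 0})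

/-- The splitting `K[X] = K[X∖u][u]`: here the variables are indexed by `τ ⊕ υ` where
`τ = X∖u` and `υ = u`, and `K[X] ≃ K[u][X∖u]` (polynomials in the variables `X∖u` with
coefficients in `A = K[u]`). -/
abbrev splitEquiv (K : Type) [Field K] (τ υ : Type) :
    MvPolynomial (τ ⊕ υ) K ≃ₐ[K] MvPolynomial τ (MvPolynomial υ K) :=
  sumAlgEquiv K τ υ

/-- The canonical map `K[X] = K[u][X∖u] → K(u)[X∖u]` where `K(u)` is the fraction field
of `K[u]`. -/
def extMap (K : Type) [Field K] (τ υ : Type) :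
    MvPolynomial (τ ⊕ υ) K →+*
      MvPolynomial τ (FractionRing (MvPolynomial υ K)) :=
  (MvPolynomial.map
      (algebraMap (MvPolynomial υ K) (FractionRing (MvPolynomial υ K)))).comp
    (splitEquiv K τ υ : MvPolynomial (τ ⊕ υ) K →+* MvPolynomial τ (MvPolynomial υ K))

namespace Ideal

variable {R S : Type*} [CommRing R] [CommRing S] {I J : Ideal R} {f : R}

theorem mem_satur {x : R} : x ∈ I.satur f ↔ ∃ n : ℕ, f ^ n * x ∈ I := Iff.rfl

theorem le_satur : I ≤ I.satur f := fun x hx => ⟨0, by simpa using hx⟩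

theorem satur_mono (h : I ≤ J) : I.satur f ≤ J.satur f := fun _ ⟨n, hn⟩ => ⟨n, h hn⟩

theorem satur_le_satur_iff : I.satur f ≤ J.satur f ↔ I ≤ J.satur f := by
  refine ⟨le_satur.trans, fun h x ⟨n, hn⟩ => ?_⟩
  obtain ⟨k, hk⟩ := h hn
  exact ⟨k + n, by rwa [pow_add, mul_assoc]⟩

theorem comap_satur (φ : S →+* R) (f : S) : (J.satur (φ f)).comap φ = (J.comap φ).satur f := by
  ext x
  simp only [mem_comap, mem_satur, map_mul, map_pow]

end Ideal

-- `mdeg` and `lCoeff` are definitionally `MonomialOrder.degree` and `MonomialOrder.leadingCoeff`.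
theorem isGroebnerBasis_iff {σ : Type} [Fintype σ] {F : Type*} [Field F] (m : MonomialOrder σ)
    (J : Ideal (MvPolynomial σ F)) (G : Set (MvPolynomial σ F)) :
    IsGroebnerBasis m J G ↔ G ⊆ J ∧
      Ideal.span (m.leadingTerm '' G) = Ideal.span (m.leadingTerm '' {p | p ∈ J ∧ p ≠ 0}) :=
  Iff.rfl

namespace MonomialOrder

variable {σ : Type*} (m : MonomialOrder σ)

theorem degree_map_of_injective {R S : Type*} [CommSemiring R] [CommSemiring S] {φ : R →+* S}
    (hφ : Function.Injective φ) (p : MvPolynomial σ R) : m.degree (map φ p) = m.degree p := by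
  classical
  rw [degree, degree, support_map_of_injective _ hφ]

variable {R : Type*} [CommRing R]

theorem sPolynomial_of_degree_le {p q : MvPolynomial σ R} (h : m.degree q ≤ m.degree p) :
    m.sPolynomial p q =
      C (m.leadingCoeff q) * p - monomial (m.degree p - m.degree q) (m.leadingCoeff p) * q := by
  rw [sPolynomial, tsub_eq_zero_of_le h, monomial_zero']

theorem degree_sPolynomial_lt_of_degree_le {p q : MvPolynomial σ R} (h : m.degree q ≤ m.degree p) :
    m.degree (m.sPolynomial p q) ≺[m] m.degree p ∨ m.sPolynomial p q = 0 := by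
  simpa [sup_eq_left.2 h] using m.degree_sPolynomial p q

theorem le_satur_span_of_exists_degree_le {J : Ideal (MvPolynomial σ R)}
    {G : Set (MvPolynomial σ R)} (hGJ : G ⊆ J) {c : R} (hc : ∀ g ∈ G, m.leadingCoeff g ∣ c)
    (hG : ∀ p ∈ J, p ≠ 0 → ∃ g ∈ G, m.degree g ≤ m.degree p) :
    J ≤ (Ideal.span G).satur (C c) := by
  intro p
  induction p using (InvImage.wf (fun p => m.toSyn (m.degree p)) wellFounded_lt).induction with
  | _ p ih => ?_
  intro hp
  by_cases hp0 : p = 0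
  · exact ⟨0, by simp [hp0]⟩
  obtain ⟨g, hgG, hgp⟩ := hG p hp hp0
  obtain ⟨N, hN⟩ : ∃ N, C c ^ N * m.sPolynomial p g ∈ Ideal.span G := by
    rcases m.degree_sPolynomial_lt_of_degree_le hgp with hlt | h0
    · exact ih _ hlt (sPolynomial_mem_ideal hp (hGJ hgG))
    · exact ⟨0, by simp [h0]⟩
  obtain ⟨u, hu⟩ := hc g hgG
  refine ⟨N + 1, ?_⟩
  have hcancel : C c ^ (N + 1) * p = C u * (C c ^ N * m.sPolynomial p g) +
      C c ^ N * C u * monomial (m.degree p - m.degree g) (m.leadingCoeff p) * g := by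
    rw [m.sPolynomial_of_degree_le hgp, hu, C_mul]
    ring
  rw [hcancel]
  exact add_mem (Ideal.mul_mem_left _ _ hN) (Ideal.mul_mem_left _ _ (Ideal.subset_span hgG))

end MonomialOrder

theorem exists_degree_le_of_isGroebnerBasis_map {σ : Type} [Fintype σ] {R F : Type*} [CommRing R]
    [Field F] (m : MonomialOrder σ) {φ : R →+* F} (hφ : Function.Injective φ)
    {J : Ideal (MvPolynomial σ R)} {G : Set (MvPolynomial σ R)}
    (hG : IsGroebnerBasis m (J.map (map φ)) (map φ '' G)) {p : MvPolynomial σ R} (hp : p ∈ J)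
    (hp0 : p ≠ 0) : ∃ g ∈ G, m.degree g ≤ m.degree p := by
  have hφp : map φ p ≠ 0 := fun h => hp0 (map_injective _ hφ (by rw [h, map_zero]))
  have hLT : m.leadingTerm (map φ p) ∈ Ideal.span (m.leadingTerm '' (map φ '' G)) := by
    rw [((isGroebnerBasis_iff m _ _).1 hG).2]
    exact Ideal.subset_span ⟨_, ⟨Ideal.mem_map_of_mem _ hp, hφp⟩, rfl⟩
  rw [MonomialOrder.span_leadingTerm_eq_span_monomial',
    ← Set.image_image (fun s => monomial s (1 : F)) m.degree, mem_ideal_span_monomial_image] at hLT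
  obtain ⟨_, ⟨_, ⟨⟨g, hg, rfl⟩, -⟩, rfl⟩, hle⟩ :=
    hLT (m.degree (map φ p)) (by simp [m.support_leadingTerm' hφp])
  exact ⟨g, hg, by rwa [m.degree_map_of_injective hφ, m.degree_map_of_injective hφ] at hle⟩

theorem stmt_14_general (m : MonomialOrder τ) (I : Ideal (MvPolynomial (τ ⊕ υ) K))
    (G : Finset (MvPolynomial (τ ⊕ υ) K)) (hGI : ∀ g ∈ G, g ∈ I)
    (hGB : IsGroebnerBasis m (Ideal.map (extMap K τ υ) I)
      ((extMap K τ υ) '' (↑G : Set _)))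
    (c : MvPolynomial υ K)
    (hlcm : (∀ g ∈ G, lCoeff m ((splitEquiv K τ υ) g) ∣ c) ∧
      ∀ d : MvPolynomial υ K, (∀ g ∈ G, lCoeff m ((splitEquiv K τ υ) g) ∣ d) → c ∣ d) :
    (Ideal.span (↑G : Set (MvPolynomial (τ ⊕ υ) K))).satur
        ((splitEquiv K τ υ).symm (C c)) =
      I.satur ((splitEquiv K τ υ).symm (C c)) := by
  let e : MvPolynomial (τ ⊕ υ) K →+* MvPolynomial τ (MvPolynomial υ K) := splitEquiv K τ υ
  let φ := algebraMap (MvPolynomial υ K) (FractionRing (MvPolynomial υ K))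
  have hGB' : IsGroebnerBasis m ((I.map e).map (map φ)) (map φ '' (e '' G)) := by
    rwa [Ideal.map_map, Set.image_image]
  have hreduce : I.map e ≤ (Ideal.span (e '' G)).satur (e ((splitEquiv K τ υ).symm (C c))) := by
    rw [show e _ = C c from (splitEquiv K τ υ).apply_symm_apply _]
    exact m.le_satur_span_of_exists_degree_le
      (Set.image_subset_iff.2 fun g hg => Ideal.mem_map_of_mem e (hGI g hg))
      (by rintro _ ⟨g, hg, rfl⟩; exact hlcm.1 g hg)
      (fun p hp hp0 => exists_degree_le_of_isGroebnerBasis_map m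
        (IsFractionRing.injective _ _) hGB' hp hp0)
  refine le_antisymm (Ideal.satur_mono (Ideal.span_le.2 hGI)) (Ideal.satur_le_satur_iff.2 ?_)
  have hpull := Ideal.comap_mono (f := e) hreduce
  rwa [Ideal.comap_map_of_bijective e (splitEquiv K τ υ).bijective, Ideal.comap_satur,
    ← Ideal.map_span, Ideal.comap_map_of_bijective e (splitEquiv K τ υ).bijective] at hpull

/-- Let `I ⊆ K[X]` be an ideal with maximal independent set `u`
(i.e. `I ∩ K[u] = 0` and `dim K[X]/I = |u|`), and let `I₀ = ⟨g_1,...,g_r⟩ ⊆ I` where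
`{g_1,...,g_r} ⊆ I` is a (finite) Gröbner basis of `I·K(u)[X∖u]` with respect to a
monomial order `m` on `X∖u`. Let `c ∈ K[u]` be the lcm of the leading coefficients of the
`g_i` viewed in `K(u)[X∖u]`. Then `I₀ : ⟨c^∞⟩ = I : ⟨c^∞⟩`. -/
theorem stmt_14 (m : MonomialOrder τ) (I : Ideal (MvPolynomial (τ ⊕ υ) K))
    (G : Finset (MvPolynomial (τ ⊕ υ) K)) (hGI : ∀ g ∈ G, g ∈ I)
    (hindep : ∀ q : MvPolynomial υ K, (splitEquiv K τ υ).symm (C q) ∈ I → q = 0)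
    (hdim : ringKrullDim (MvPolynomial (τ ⊕ υ) K ⧸ I) = Fintype.card υ)
    (hGB : IsGroebnerBasis m (Ideal.map (extMap K τ υ) I)
      ((extMap K τ υ) '' (↑G : Set _)))
    (c : MvPolynomial υ K)
    (hlcm : (∀ g ∈ G, lCoeff m ((splitEquiv K τ υ) g) ∣ c) ∧
      ∀ d : MvPolynomial υ K, (∀ g ∈ G, lCoeff m ((splitEquiv K τ υ) g) ∣ d) → c ∣ d) :
    (Ideal.span (↑G : Set (MvPolynomial (τ ⊕ υ) K))).satur
        ((splitEquiv K τ υ).symm (C c)) =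
      I.satur ((splitEquiv K τ υ).symm (C c)) :=
  stmt_14_general m I G hGI hGB c hlcm
end
end

section
/- The set u_1 = {x_1,...,x_12, y_1,...,y_12, z_1, z_2} of 26 variables is an independent set for the determinantal hyperedge ideal I, i.e., I ∩ Q[u_1] = 0. -/
open MvPolynomial

noncomputable section

/-- The polynomial ring `ℚ[x_1,…,x_12, y_1,…,y_12, z_1,…,z_12]`: the variable indexed by
`(j, i) : Fin 3 × Fin 12` is the entry of the generic 3×12 matrix `M` in row `j`
(row `0` = `x`, row `1` = `y`, row `2` = `z`) and column `i`. -/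
abbrev R36 : Type := MvPolynomial (Fin 3 × Fin 12) ℚ

/-- The 3×3 minor `[N|B]` of the generic 3×12 matrix, where the columns of `B` are
`c 0, c 1, c 2`. -/
def minor (c : Fin 3 → Fin 12) : R36 :=
  Matrix.det (Matrix.of fun j k : Fin 3 => X (j, c k))

/-- The sixteen generators of the determinantal hyperedge ideal: the minors `[N|B]` with
`B` one of the row blocks `R_{i+1} = {3i+1, 3i+2, 3i+3}` (0-based: `{3i, 3i+1, 3i+2}`),
or `B` a 3-element subset (given by a strictly monotone `f : Fin 3 → Fin 4`) of one of the
column blocks `C_{j+1} = {j+1, j+4, j+7, j+10}` (0-based: `{j, j+3, j+6, j+9}`). -/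
def hyperedgeGens : Set R36 :=
  {p | (∃ i : Fin 4, p = minor fun k => ⟨3 * i.1 + k.1, by have := i.2; have := k.2; omega⟩) ∨
       (∃ j : Fin 3, ∃ f : Fin 3 → Fin 4, StrictMono f ∧
          p = minor fun k => ⟨j.1 + 3 * (f k).1, by have := j.2; have := (f k).2; omega⟩)}

/-- The determinantal hyperedge ideal `I`. -/
def hyperedgeIdeal : Ideal R36 := Ideal.span hyperedgeGens

/-- The set `u₁ = {x_1,…,x_12, y_1,…,y_12, z_1, z_2}` of 26 variables (0-based: the
`z`-variables are those with row index `2`, and `z_1, z_2` have column indices `0, 1`). -/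
def u1 : Set (Fin 3 × Fin 12) :=
  {v | v.1 = 0 ∨ v.1 = 1 ∨ (v.1 = 2 ∧ (v.2 = 0 ∨ v.2 = 1))}

/-!
On the locus where the `z`-row of the generic matrix is a linear combination `a • x + b • y`
of the `x`- and `y`-rows, every 3×3 minor vanishes. Over the fraction field, where
`x₁ y₂ - x₂ y₁` is invertible, Cramer's rule gives `a, b` with `a x_i + b y_i = z_i` for
`i = 1, 2`. Substituting `z_i ↦ a x_i + b y_i` is then a ℚ-algebra map `R → Frac R` that kills
`I` but is the canonical embedding on `ℚ[u₁]`, so `I ∩ ℚ[u₁] = 0`.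
-/

theorem Matrix.det_eq_zero_of_row_eq_smul_add_smul {n R : Type*} [Fintype n] [DecidableEq n]
    [CommRing R] {M : Matrix n n R} {i j k : n} (hik : i ≠ k) (hjk : j ≠ k) {a b : R}
    (h : M k = a • M i + b • M j) : M.det = 0 := by
  rw [← M.updateRow_eq_self k, h, det_updateRow_add, det_updateRow_smul, det_updateRow_smul,
    det_zero_of_row_eq hik (by simp [updateRow_ne hik]),
    det_zero_of_row_eq hjk (by simp [updateRow_ne hjk])]
  simp

theorem MvPolynomial.eqOn_supported_of_eq_on_X {σ R A : Type*} [CommSemiring R] [Semiring A]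
    [Algebra R A] {φ ψ : MvPolynomial σ R →ₐ[R] A} {s : Set σ}
    (h : ∀ v ∈ s, φ (X v) = ψ (X v)) : Set.EqOn φ ψ (supported R s) := by
  rw [supported_eq_adjoin_X, AlgHom.eqOn_adjoin_iff]
  rintro _ ⟨v, hv, rfl⟩
  exact h v hv

namespace HyperedgeIdeal

local notation "K36" => FractionRing R36

def entry (j : Fin 3) (i : Fin 12) : K36 := algebraMap R36 K36 (X (j, i))

def xyMinor : K36 := entry 0 0 * entry 1 1 - entry 0 1 * entry 1 0

def coeffX : K36 := (entry 2 0 * entry 1 1 - entry 2 1 * entry 1 0) / xyMinor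

def coeffY : K36 := (entry 0 0 * entry 2 1 - entry 0 1 * entry 2 0) / xyMinor

def zSubst (v : Fin 3 × Fin 12) : K36 :=
  if v.1 = 2 then coeffX * entry 0 v.2 + coeffY * entry 1 v.2 else entry v.1 v.2

def specializeZ : R36 →ₐ[ℚ] K36 := aeval zSubst

theorem xyMinor_ne_zero : xyMinor ≠ 0 := by
  have hpoly : (X (0, 0) * X (1, 1) - X (0, 1) * X (1, 0) : R36) ≠ 0 := fun h => by
    simpa using congrArg (eval fun v => if v = (0, 0) ∨ v = (1, 1) then (1 : ℚ) else 0) h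
  simpa [xyMinor, entry] using (IsFractionRing.to_map_ne_zero_of_mem_nonZeroDivisors
    (mem_nonZeroDivisors_of_ne_zero hpoly) : algebraMap R36 K36 _ ≠ 0)

theorem coeffX_mul_add_coeffY_mul {i : Fin 12} (hi : i = 0 ∨ i = 1) :
    coeffX * entry 0 i + coeffY * entry 1 i = entry 2 i := by
  rw [coeffX, coeffY, div_mul_eq_mul_div, div_mul_eq_mul_div, ← add_div,
    div_eq_iff xyMinor_ne_zero, xyMinor]
  rcases hi with rfl | rfl <;> ring

theorem zSubst_of_mem_u1 {v : Fin 3 × Fin 12} (hv : v ∈ u1) :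
    zSubst v = algebraMap R36 K36 (X v) := by
  obtain ⟨j, i⟩ := v
  rcases hv with rfl | rfl | ⟨rfl, hi⟩
  · rfl
  · rfl
  · exact coeffX_mul_add_coeffY_mul hi

theorem specializeZ_of_mem_supported {p : R36} (hp : p ∈ supported ℚ u1) :
    specializeZ p = algebraMap R36 K36 p :=
  eqOn_supported_of_eq_on_X (ψ := IsScalarTower.toAlgHom ℚ R36 K36)
    (fun v hv => by simpa [specializeZ] using zSubst_of_mem_u1 hv) hp

theorem specializeZ_minor (c : Fin 3 → Fin 12) : specializeZ (minor c) = 0 := by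
  rw [minor, AlgHom.map_det]
  refine Matrix.det_eq_zero_of_row_eq_smul_add_smul (i := 0) (j := 1) (k := 2)
    (a := coeffX) (b := coeffY) (by decide) (by decide) ?_
  ext k
  simp [specializeZ, zSubst]

theorem hyperedgeIdeal_le_ker_specializeZ : hyperedgeIdeal ≤ RingHom.ker specializeZ :=
  Ideal.span_le.mpr <| by
    rintro _ (⟨i, rfl⟩ | ⟨j, f, -, rfl⟩) <;> exact specializeZ_minor _

end HyperedgeIdeal

open HyperedgeIdeal

/-- the set `u₁ = {x_1,…,x_12, y_1,…,y_12, z_1, z_2}` of 26 variables is an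
independent set for the determinantal hyperedge ideal `I`, i.e., `I ∩ ℚ[u₁] = 0`. -/
theorem stmt_18 :
    ∀ p ∈ hyperedgeIdeal, p ∈ MvPolynomial.supported ℚ u1 → p = 0 := by
  intro p hpI hpS
  have hp : specializeZ p = 0 := hyperedgeIdeal_le_ker_specializeZ hpI
  rw [specializeZ_of_mem_supported hpS] at hp
  exact IsFractionRing.to_map_eq_zero_iff.mp hp
end
end

section
/- Let I be a proper ideal of a Noetherian ring R and h ∈ R with h ∉ √I. Then there exists m ≥ 1 such that I : ⟨h^m⟩ = I : ⟨h^{m+k}⟩ for all k ≥ 0, i.e., the saturation I : ⟨h^∞⟩ is achieved at a finite power, and moreover I = (I : ⟨h^∞⟩) ∩ (I + ⟨h^m⟩) for this m. -/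
/-!
Since `R` is Noetherian, the ascending chain `I : ⟨h^n⟩` stabilizes at some `n`, and its stable
value is the saturation `I : ⟨h^∞⟩`. For the splitting, write `x ∈ (I : ⟨f⟩) ∩ (I + ⟨f⟩)` as
`x = i + c f`; then `c f² = x f - i f ∈ I`, so `c ∈ I : ⟨f²⟩ = I : ⟨f⟩` and `x ∈ I`.
-/

namespace Ideal

variable {R : Type*} [CommRing R] (I : Ideal R)

theorem eq_colon_span_inf_sup_span {f : R} (hf : I.colon (span {f ^ 2}) = I.colon (span {f})) :
    I = I.colon (span {f}) ⊓ (I ⊔ span {f}) := by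
  refine le_antisymm (le_inf le_colon le_sup_left) ?_
  intro x hx
  obtain ⟨hxf, hxsup⟩ := Submodule.mem_inf.mp hx
  obtain ⟨i, hi, y, hy, rfl⟩ := Submodule.mem_sup.mp hxsup
  obtain ⟨c, rfl⟩ := mem_span_singleton'.mp hy
  rw [mem_colon_span_singleton] at hxf
  have hcf2 : c * f ^ 2 ∈ I := by
    convert I.sub_mem hxf (I.mul_mem_right f hi) using 1
    ring
  have hcf : c * f ∈ I := by
    rw [← mem_colon_span_singleton, ← hf, mem_colon_span_singleton]
    exact hcf2
  exact I.add_mem hi hcf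

variable (h : R)

theorem monotone_colon_span_pow : Monotone fun n : ℕ => I.colon (span {h ^ n}) := by
  intro a b hab r hr
  obtain ⟨c, rfl⟩ := Nat.exists_eq_add_of_le hab
  rw [mem_colon_span_singleton, pow_add, ← mul_assoc] at *
  exact I.mul_mem_right _ hr

theorem exists_colon_span_pow_eq [IsNoetherianRing R] :
    ∃ n, ∀ k, n ≤ k → I.colon (span {h ^ k}) = I.colon (span {h ^ n}) := by
  obtain ⟨n, hn⟩ := monotone_stabilizes_iff_noetherian.mpr inferInstance
    ⟨_, I.monotone_colon_span_pow h⟩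
  exact ⟨n, fun k hk => (hn k hk).symm⟩

theorem colon_span_pow_le_satur (n : ℕ) : I.colon (span {h ^ n}) ≤ I.satur h :=
  fun r hr => ⟨n, by rw [mul_comm]; exact mem_colon_span_singleton.mp hr⟩

theorem colon_span_pow_eq_satur {n : ℕ}
    (hn : ∀ k, n ≤ k → I.colon (span {h ^ k}) = I.colon (span {h ^ n})) :
    I.colon (span {h ^ n}) = I.satur h := by
  refine le_antisymm (I.colon_span_pow_le_satur h n) ?_
  rintro r ⟨k, hk⟩
  have hr : r ∈ I.colon (span {h ^ k}) := mem_colon_span_singleton.mpr (by rwa [mul_comm])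
  rw [← hn (max n k) (le_max_left n k)]
  exact I.monotone_colon_span_pow h (le_max_right n k) hr

end Ideal

theorem stmt_19_general {R : Type*} [CommRing R] [IsNoetherianRing R] (I : Ideal R)
    (h : R) :
    ∃ m : ℕ, 1 ≤ m ∧
      (∀ k : ℕ, Submodule.colon I (Ideal.span {h ^ m}) =
        Submodule.colon I (Ideal.span {h ^ (m + k)})) ∧
      Submodule.colon I (Ideal.span {h ^ m}) = I.satur h ∧
      I = I.satur h ⊓ (I ⊔ Ideal.span {h ^ m}) := by
  obtain ⟨n, hn⟩ := I.exists_colon_span_pow_eq h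
  have hstable : ∀ k, n + 1 ≤ k →
      I.colon (Ideal.span {h ^ k}) = I.colon (Ideal.span {h ^ (n + 1)}) :=
    fun k hk => (hn k (by omega)).trans (hn (n + 1) (by omega)).symm
  have hsat := I.colon_span_pow_eq_satur h hstable
  refine ⟨n + 1, by omega, fun k => (hstable _ (by omega)).symm, hsat, ?_⟩
  rw [← hsat]
  refine I.eq_colon_span_inf_sup_span ?_
  rw [← pow_mul]
  exact hstable _ (by omega)

/-- Let `I` be a proper ideal of a Noetherian ring `R` and `h ∈ R` with
`h ∉ √I`. Then there exists `m ≥ 1` such that `I : ⟨h^m⟩ = I : ⟨h^{m+k}⟩` for all `k ≥ 0`,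
i.e., the saturation `I : ⟨h^∞⟩` is achieved at a finite power, and moreover
`I = (I : ⟨h^∞⟩) ∩ (I + ⟨h^m⟩)` for this `m`. -/
theorem stmt_19 {R : Type*} [CommRing R] [IsNoetherianRing R] (I : Ideal R) (hI : I ≠ ⊤)
    (h : R) (hh : h ∉ I.radical) :
    ∃ m : ℕ, 1 ≤ m ∧
      (∀ k : ℕ, Submodule.colon I (Ideal.span {h ^ m}) =
        Submodule.colon I (Ideal.span {h ^ (m + k)})) ∧
      Submodule.colon I (Ideal.span {h ^ m}) = I.satur h ∧
      I = I.satur h ⊓ (I ⊔ Ideal.span {h ^ m}) :=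
  stmt_19_general I h
end
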